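/- arXiv:2207.05035 — 2 statements merged into one kernel-verified Lean document; each statement's English description precedes it below -/
import Mathlib

section
/- Let p ≥ 2, r ≥ 0, g ≥ 1 and u be integers with p = 2^r g + u and 0 ≤ u < 2^r, and let d be an integer with 0 < |d| < p/2^{r+1}. Then | Σ_{y=0}^{g−1} e^{2πi·2^r d y/p} | ≤ 1. -/
/-!
With `θ = 2^r d / p` the sum is geometric with ratio `e^{2πiθ}`, so its norm is
`|sin (π g θ)| / |sin (π θ)|`. Since `g θ = d - u d / p` with `d` an integer, the numerator is
`|sin (π u d / p)|`, and `u < 2^r` gives `|u d / p| ≤ |θ| < 1/2`, a range on which `|sin (π x)|`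
increases with `|x|`.
-/

open Complex Real

lemma norm_exp_two_pi_I_mul_sub_one (x : ℝ) :
    ‖Complex.exp (2 * π * I * x) - 1‖ = 2 * |Real.sin (π * x)| := by
  have h := norm_exp_I_mul_ofReal_sub_one (2 * π * x)
  push_cast at h
  rw [show 2 * π * I * x = I * (2 * π * x) by ring, h, norm_mul, Real.norm_eq_abs,
    Real.norm_eq_abs, abs_two]
  ring_nf

lemma norm_sum_range_exp_two_pi_I_mul (θ : ℝ) (hθ : Real.sin (π * θ) ≠ 0) (g : ℕ) :
    ‖∑ y ∈ Finset.range g, Complex.exp (2 * π * I * θ * y)‖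
      = |Real.sin (π * (g * θ))| / |Real.sin (π * θ)| := by
  set z := Complex.exp (2 * π * I * θ)
  have hz : z ≠ 1 := by
    rw [← sub_ne_zero, ← norm_ne_zero_iff, norm_exp_two_pi_I_mul_sub_one]
    simpa using hθ
  have hpow (n : ℕ) : Complex.exp (2 * π * I * θ * n) = z ^ n := by
    rw [← Complex.exp_nat_mul]; ring_nf
  simp_rw [hpow]
  have hzg : z ^ g = Complex.exp (2 * π * I * ((g * θ : ℝ) : ℂ)) := by
    rw [← hpow]; push_cast; ring_nf
  rw [geom_sum_eq hz, norm_div, hzg, norm_exp_two_pi_I_mul_sub_one,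
    norm_exp_two_pi_I_mul_sub_one, mul_div_mul_left _ _ two_ne_zero]

lemma abs_sin_le_abs_sin_of_abs_le {a b : ℝ} (hab : |a| ≤ |b|) (hb : |b| ≤ π / 2) :
    |Real.sin a| ≤ |Real.sin b| := by
  have hpi := pi_pos
  rw [abs_sin_eq_sin_abs_of_abs_le_pi (by linarith), abs_sin_eq_sin_abs_of_abs_le_pi (by linarith)]
  exact sin_le_sin_of_le_of_le_pi_div_two (by linarith [abs_nonneg a]) hb hab

lemma norm_sum_range_exp_two_pi_I_mul_le_one {θ a : ℝ} {n : ℤ} {g : ℕ} (hθ₀ : θ ≠ 0)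
    (hθ : |θ| ≤ 1 / 2) (ha : |a| ≤ |θ|) (hgθ : g * θ = n - a) :
    ‖∑ y ∈ Finset.range g, Complex.exp (2 * π * I * θ * y)‖ ≤ 1 := by
  have hπθ : |π * θ| ≤ π / 2 := by
    rw [abs_mul, abs_of_pos pi_pos]; nlinarith [pi_pos]
  have hsin : Real.sin (π * θ) ≠ 0 := by
    rw [Ne, sin_eq_zero_iff_of_lt_of_lt (by linarith [neg_abs_le (π * θ), pi_pos])
      (by linarith [le_abs_self (π * θ), pi_pos])]
    exact mul_ne_zero pi_ne_zero hθ₀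
  have hπa : |π * a| ≤ |π * θ| := by
    rw [abs_mul, abs_mul]; gcongr
  rw [norm_sum_range_exp_two_pi_I_mul θ hsin, hgθ, mul_sub, mul_comm π, sin_int_mul_pi_sub,
    abs_neg, abs_mul, abs_neg_one_zpow, one_mul]
  exact div_le_one_of_le₀ (abs_sin_le_abs_sin_of_abs_le hπa hπθ) (abs_nonneg _)

theorem geometric_sum_le_one_general (p r g u : ℕ)
    (hpu : p = 2 ^ r * g + u) (hu : u < 2 ^ r)
    (d : ℤ) (hd₀ : d ≠ 0) (hd : |(d : ℝ)| < (p : ℝ) / 2 ^ (r + 1)) :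
    ‖∑ y ∈ Finset.range g,
        Complex.exp (2 * Real.pi * Complex.I * ((2 : ℂ) ^ r * (d : ℂ) * (y : ℂ)) / (p : ℂ))‖
      ≤ 1 := by
  have hd_pos : (0 : ℝ) < |(d : ℝ)| := abs_pos.mpr (Int.cast_ne_zero.mpr hd₀)
  have hp : (0 : ℝ) < p := (div_pos_iff_of_pos_right (by positivity)).mp (hd_pos.trans hd)
  set θ : ℝ := 2 ^ r * d / p with hθ_def
  have hsum : ∀ y ∈ Finset.range g,
      Complex.exp (2 * π * I * ((2 : ℂ) ^ r * (d : ℂ) * (y : ℂ)) / (p : ℂ))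
        = Complex.exp (2 * π * I * θ * y) := by
    intro y _
    rw [hθ_def]; push_cast; field_simp
  have hθ : |θ| ≤ 1 / 2 := by
    rw [hθ_def, abs_div, abs_mul, abs_of_pos (by positivity : (0 : ℝ) < 2 ^ r), abs_of_pos hp,
      div_le_iff₀ hp]
    rw [lt_div_iff₀ (by positivity), pow_succ] at hd
    linarith
  have ha : |(u * d / p : ℝ)| ≤ |θ| := by
    rw [hθ_def, abs_div, abs_div, abs_mul, abs_mul, Nat.abs_cast, abs_of_pos hp]
    gcongr
    exact_mod_cast hu.le
  have hgθ : g * θ = d - u * d / p := by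
    have hp_eq : (p : ℝ) = 2 ^ r * g + u := by exact_mod_cast hpu
    rw [hθ_def]; field_simp; linarith
  rw [Finset.sum_congr rfl hsum]
  exact norm_sum_range_exp_two_pi_I_mul_le_one (div_ne_zero (by positivity) hp.ne') hθ ha hgθ

/-- Let `p = 2^r g + u` with `g ≥ 1` and `0 ≤ u < 2^r`, and let `d` be an integer with
`0 < |d| < p/2^{r+1}`.  Then `|∑_{y=0}^{g-1} e^{2πi·2^r d y/p}| ≤ 1`. -/
theorem geometric_sum_le_one (p r g u : ℕ) (hp : 2 ≤ p) (hg : 1 ≤ g)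
    (hpu : p = 2 ^ r * g + u) (hu : u < 2 ^ r)
    (d : ℤ) (hd₀ : d ≠ 0) (hd : |(d : ℝ)| < (p : ℝ) / 2 ^ (r + 1)) :
    ‖∑ y ∈ Finset.range g,
        Complex.exp (2 * Real.pi * Complex.I * ((2 : ℂ) ^ r * (d : ℂ) * (y : ℂ)) / (p : ℂ))‖
      ≤ 1 :=
  geometric_sum_le_one_general p r g u hpu hu d hd₀ hd
end

section
/- Fix a cutoff φ ∈ C_c^∞(ℝ) with 0 ≤ φ ≤ 1, φ ≡ 1 on [−2,2] and supp φ ⊂ [−2−1/100, 2+1/100]. For integers p ≥ 2 and r ≥ 0 define ψ_r(t) = Σ_{l∈ℤ} φ(l/2^r) e^{2πi l t/p} (a finite sum). Then there is a constant C depending only on φ such that for every integer t not divisible by p, |ψ_r(t)| ≤ C 2^{−r} p² / dist_p(t,0)². -/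
/-!
With `z = e^{2πit/p}` and `a_l = φ(l/2^r)` we have `ψ_r(t) = ∑_l a_l z^l`, and summing by parts
twice gives `(z⁻¹ - 1)² ψ_r(t) = ∑_l (Δ²a)_l z^l`. By the mean value theorem the second
differences are at most `‖φ''‖_∞ 4^{-r}`, and they vanish outside a window of `O(2^r)` integers,
so `|1 - z|² |ψ_r(t)| = O(2^{-r})`. Finally `|1 - z| = 2 |sin(πt/p)| ≥ 4 dist_p(t,0)/p` by
Jordan's inequality `sin x ≥ 2x/π` on `[0, π/2]`.
-/

open Complex

noncomputable section

/-- `dist_p(a,b)` for integers `a`, `b`: the absolute value of the representative `c` of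
`a - b (mod p)` with `-p/2 < c ≤ p/2`. -/
def distIntMod (p : ℕ) (a b : ℤ) : ℤ := min ((a - b) % (p : ℤ)) ((b - a) % (p : ℤ))

/-- `ψ_r(t) = ∑_{l ∈ ℤ} φ(l/2^r) e^{2πilt/p}` (a finite sum since `φ` has compact
support), evaluated at an integer `t`. -/
def psiInt (φ : ℝ → ℝ) (p : ℕ) (r : ℕ) (t : ℤ) : ℂ :=
  ∑' l : ℤ, (φ ((l : ℝ) / 2 ^ r) : ℂ) *
    Complex.exp (2 * Real.pi * Complex.I * (l : ℂ) * (t : ℂ) / (p : ℂ))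

open fwdDiff
open scoped Real

section FwdDiff

variable {E : Type*} [NormedAddCommGroup E] [NormedSpace ℝ E]

theorem norm_fwdDiff_le_of_norm_deriv_le {f : ℝ → E} {C : ℝ} (hf : Differentiable ℝ f)
    (hC : ∀ x, ‖deriv f x‖ ≤ C) (h x : ℝ) : ‖Δ_[h] f x‖ ≤ C * |h| := by
  simpa [fwdDiff, Real.norm_eq_abs] using convex_univ.norm_image_sub_le_of_norm_deriv_le
    (fun y _ => hf y) (fun y _ => hC y) (Set.mem_univ x) (Set.mem_univ (x + h))

theorem iteratedDeriv_fwdDiff {n : ℕ} {f : ℝ → E} (hf : ContDiff ℝ n f) (h : ℝ) :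
    iteratedDeriv n (Δ_[h] f) = Δ_[h] (iteratedDeriv n f) := by
  ext x
  have hshift : ContDiff ℝ n fun y => f (y + h) := hf.comp (contDiff_id.add contDiff_const)
  show iteratedDeriv n (fun y => f (y + h) - f y) x = _
  rw [iteratedDeriv_fun_sub hshift.contDiffAt hf.contDiffAt, iteratedDeriv_comp_add_const]
  rfl

theorem norm_fwdDiff_iter_le {n : ℕ} {f : ℝ → E} {M : ℝ} (hf : ContDiff ℝ n f)
    (hM : ∀ x, ‖iteratedDeriv n f x‖ ≤ M) (h x : ℝ) : ‖(Δ_[h])^[n] f x‖ ≤ M * |h| ^ n := by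
  induction n generalizing f M with
  | zero => simpa using hM x
  | succ n ih =>
    have hdiff : Differentiable ℝ (iteratedDeriv n f) :=
      hf.differentiable_iteratedDeriv n (by exact_mod_cast n.lt_succ_self)
    have hf' : ContDiff ℝ n f := hf.of_le (by exact_mod_cast n.le_succ)
    have hΔ : ∀ y, ‖iteratedDeriv n (Δ_[h] f) y‖ ≤ M * |h| := by
      intro y
      rw [iteratedDeriv_fwdDiff hf' h]
      exact norm_fwdDiff_le_of_norm_deriv_le hdiff (by simpa [← iteratedDeriv_succ] using hM) h y
    have hcont : ContDiff ℝ n (Δ_[h] f) :=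
      (hf'.comp (contDiff_id.add contDiff_const)).sub hf'
    rw [Function.iterate_succ_apply, pow_succ', ← mul_assoc]
    exact ih hcont hΔ

end FwdDiff

theorem fwdDiff_iter_ofReal_comp_intCast_mul (g : ℝ → ℝ) (h : ℝ) (n : ℕ) (l : ℤ) :
    (Δ_[1])^[n] (fun k : ℤ => (g (k * h) : ℂ)) l = (((Δ_[h])^[n] g (l * h) : ℝ) : ℂ) := by
  simp [fwdDiff_iter_eq_sum_shift, add_mul]

theorem fwdDiff_iter_eq_zero_of_notMem_Icc {G : Type*} [AddCommGroup G] {f : ℤ → G} {a b : ℤ}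
    (hf : ∀ l ∉ Finset.Icc a b, f l = 0) (n : ℕ) {l : ℤ} (hl : l ∉ Finset.Icc (a - n) b) :
    (Δ_[1])^[n] f l = 0 := by
  rw [fwdDiff_iter_eq_sum_shift]
  refine Finset.sum_eq_zero fun k hk => ?_
  rw [hf, smul_zero]
  simp only [Finset.mem_range, Finset.mem_Icc, not_and_or, not_le, nsmul_one] at hk hl ⊢
  omega

section Tsum

variable {K : Type*} [Field K] [TopologicalSpace K] [IsTopologicalRing K] [T2Space K]

theorem tsum_fwdDiff_mul_zpow {f : ℤ → K} (hf : f.HasFiniteSupport) {z : K} (hz : z ≠ 0) :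
    ∑' l, Δ_[1] f l * z ^ l = (z⁻¹ - 1) * ∑' l, f l * z ^ l := by
  have hshift : ∑' l, f (l + 1) * z ^ l = z⁻¹ * ∑' l, f l * z ^ l := by
    rw [← tsum_mul_left, ← (Equiv.subRight (1 : ℤ)).tsum_eq]
    refine tsum_congr fun l => ?_
    simp [zpow_sub_one₀ hz]
    ring
  have hs : Summable fun l => f l * z ^ l := summable_of_hasFiniteSupport (hf.fun_mul_left _)
  have hs' : Summable fun l => f (l + 1) * z ^ l :=
    summable_of_hasFiniteSupport ((hf.comp_of_injective (add_left_injective 1)).fun_mul_left _)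
  simp only [fwdDiff, sub_mul]
  rw [hs'.tsum_sub hs, hshift]
  ring

theorem tsum_fwdDiff_iter_mul_zpow {f : ℤ → K} (hf : f.HasFiniteSupport) {z : K} (hz : z ≠ 0)
    (n : ℕ) : ∑' l, (Δ_[1])^[n] f l * z ^ l = (z⁻¹ - 1) ^ n * ∑' l, f l * z ^ l := by
  induction n generalizing f with
  | zero => simp
  | succ n ih =>
    have hΔ : (Δ_[1] f).HasFiniteSupport :=
      (hf.comp_of_injective (add_left_injective 1)).sub hf
    rw [Function.iterate_succ_apply, ih hΔ, tsum_fwdDiff_mul_zpow hf hz, pow_succ, mul_assoc]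

end Tsum

theorem norm_tsum_le_card_mul {E : Type*} [SeminormedAddCommGroup E] {ι : Type*} {f : ι → E}
    {s : Finset ι} (hf : ∀ i ∉ s, f i = 0) {B : ℝ} (hB : ∀ i, ‖f i‖ ≤ B) :
    ‖∑' i, f i‖ ≤ s.card * B := by
  rw [tsum_eq_sum hf]
  exact (norm_sum_le _ _).trans (by simpa using Finset.sum_le_card_nsmul s _ B fun i _ => hB i)

theorem distIntMod_zero_eq_min {p : ℕ} {t : ℤ} (ht : ¬(p : ℤ) ∣ t) :
    distIntMod p t 0 = min (t % p) (p - t % p) := by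
  rw [distIntMod, sub_zero, zero_sub, Int.neg_emod, if_neg ht, Int.natAbs_natCast]

theorem distIntMod_neg_left_zero (p : ℕ) (t : ℤ) : distIntMod p (-t) 0 = distIntMod p t 0 := by
  simp [distIntMod, min_comm]

theorem distIntMod_zero_pos {p : ℕ} (hp : 0 < p) {t : ℤ} (ht : ¬(p : ℤ) ∣ t) :
    0 < distIntMod p t 0 := by
  have hm_pos : 0 < t % p := lt_of_le_of_ne (Int.emod_nonneg t (by omega))
    fun h => ht (Int.dvd_of_emod_eq_zero h.symm)
  have hm_lt : t % p < p := Int.emod_lt_of_pos t (by omega)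
  rw [distIntMod_zero_eq_min ht]
  omega

theorem two_mul_distIntMod_le {p : ℕ} {t : ℤ} (ht : ¬(p : ℤ) ∣ t) :
    2 * distIntMod p t 0 ≤ p := by
  rw [distIntMod_zero_eq_min ht]
  omega

theorem two_mul_distIntMod_div_le_abs_sin {p : ℕ} (hp : 0 < p) {t : ℤ} (ht : ¬(p : ℤ) ∣ t) :
    2 * distIntMod p t 0 / p ≤ |Real.sin (π * t / p)| := by
  set m := t % (p : ℤ)
  have hm_nonneg : 0 ≤ m := Int.emod_nonneg t (by omega)
  have hm_lt : m < p := Int.emod_lt_of_pos t (by omega)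
  have hp' : (0 : ℝ) < p := by exact_mod_cast hp
  have hsin_t : |Real.sin (π * t / p)| = Real.sin (π * m / p) := by
    have hdecomp : π * t / p = π * m / p + (t / (p : ℤ) : ℤ) * π := by
      have ht_eq : (t : ℝ) = m + (t / (p : ℤ) : ℤ) * p := by
        exact_mod_cast (Int.emod_add_ediv_mul t p).symm
      rw [ht_eq]
      field_simp
    have hm_le : π * m / p ≤ π := by
      rw [div_le_iff₀ hp']
      exact mul_le_mul_of_nonneg_left (by exact_mod_cast hm_lt.le) Real.pi_pos.le
    rw [hdecomp, Real.sin_add_int_mul_pi, abs_mul, abs_neg_one_zpow, one_mul, abs_of_nonneg]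
    exact Real.sin_nonneg_of_nonneg_of_le_pi (by positivity) hm_le
  have hsin_d : Real.sin (π * m / p) = Real.sin (π * distIntMod p t 0 / p) := by
    rcases min_choice m (p - m) with h | h <;> rw [distIntMod_zero_eq_min ht, h]
    push_cast
    rw [show π * (p - m) / p = π - π * m / p by field_simp, Real.sin_pi_sub]
  have hd_nonneg : (0 : ℝ) ≤ distIntMod p t 0 := by exact_mod_cast (distIntMod_zero_pos hp ht).le
  have hd_le : π * distIntMod p t 0 / p ≤ π / 2 := by
    have : (2 * distIntMod p t 0 : ℝ) ≤ p := by exact_mod_cast two_mul_distIntMod_le ht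
    rw [div_le_div_iff₀ hp' two_pos]
    nlinarith [Real.pi_pos]
  calc 2 * distIntMod p t 0 / p = 2 / π * (π * distIntMod p t 0 / p) := by
        field_simp
    _ ≤ Real.sin (π * distIntMod p t 0 / p) := Real.mul_le_sin (by positivity) hd_le
    _ = |Real.sin (π * t / p)| := by rw [hsin_t, hsin_d]

theorem four_mul_distIntMod_div_le_norm_exp_sub_one {p : ℕ} (hp : 0 < p) {t : ℤ}
    (ht : ¬(p : ℤ) ∣ t) : 4 * distIntMod p t 0 / p ≤ ‖exp (2 * π * I * t / p) - 1‖ := by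
  have harg : 2 * π * I * t / p = I * ((2 * π * t / p : ℝ) : ℂ) := by push_cast; ring
  rw [harg, norm_exp_I_mul_ofReal_sub_one, norm_mul, Real.norm_two, Real.norm_eq_abs,
    show 2 * π * t / p / 2 = π * t / p by ring]
  calc 4 * (distIntMod p t 0 : ℝ) / p = 2 * (2 * distIntMod p t 0 / p) := by ring
    _ ≤ 2 * |Real.sin (π * t / p)| := by gcongr; exact two_mul_distIntMod_div_le_abs_sin hp ht

theorem HasCompactSupport.exists_nat_abs_le {E : Type*} [Zero E] {f : ℝ → E}
    (hf : HasCompactSupport f) : ∃ R : ℕ, ∀ x, f x ≠ 0 → |x| ≤ R := by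
  obtain ⟨r, hr⟩ := hf.isCompact.isBounded.subset_closedBall 0
  refine ⟨⌈r⌉₊, fun x hx => ?_⟩
  have hx' := hr (subset_tsupport f hx)
  rw [Metric.mem_closedBall, Real.dist_0_eq_abs] at hx'
  exact hx'.trans (Nat.le_ceil r)

theorem psiInt_eq_tsum (φ : ℝ → ℝ) (p r : ℕ) (t : ℤ) :
    psiInt φ p r t = ∑' l : ℤ, (φ (l * (2 ^ r)⁻¹) : ℂ) * exp (2 * π * I * t / p) ^ l := by
  refine tsum_congr fun l => ?_
  rw [← exp_int_mul, div_eq_mul_inv]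
  ring_nf

theorem norm_exp_inv_sub_one_sq_mul_norm_psiInt_le {φ : ℝ → ℝ} (hφ : ContDiff ℝ 2 φ) {R : ℕ}
    (hR : ∀ x, φ x ≠ 0 → |x| ≤ R) {M : ℝ} (hM : ∀ x, ‖iteratedDeriv 2 φ x‖ ≤ M)
    (p r : ℕ) (t : ℤ) :
    ‖(exp (2 * π * I * t / p))⁻¹ - 1‖ ^ 2 * ‖psiInt φ p r t‖ ≤ (2 * R + 3) * M / 2 ^ r := by
  set h : ℝ := (2 ^ r)⁻¹
  set z := exp (2 * π * I * t / p)
  set a : ℤ → ℂ := fun l => (φ (l * h) : ℂ)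
  set N : ℤ := R * 2 ^ r
  have hh : 0 < h := by positivity
  have ha : ∀ l ∉ Finset.Icc (-N) N, a l = 0 := by
    intro l hl
    by_contra hne
    have hlR := hR _ (ofReal_ne_zero.mp hne)
    rw [abs_mul, abs_of_pos hh, ← le_div_iff₀ hh, div_inv_eq_mul] at hlR
    rw [Finset.mem_Icc, ← abs_le] at hl
    exact hl (by exact_mod_cast hlR)
  have hfin : a.HasFiniteSupport :=
    (Finset.Icc (-N) N).finite_toSet.subset fun l hl => by_contra fun hl' => hl (ha l hl')
  have hz : ‖z‖ = 1 := by
    rw [norm_exp]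
    simp
  have hterm : ∀ l, ‖(Δ_[1])^[2] a l * z ^ l‖ ≤ M * h ^ 2 := by
    intro l
    rw [norm_mul, norm_zpow, hz, one_zpow, mul_one, fwdDiff_iter_ofReal_comp_intCast_mul,
      norm_real]
    exact (norm_fwdDiff_iter_le hφ hM h _).trans_eq (by rw [abs_of_pos hh])
  have hcard : ((Finset.Icc (-N - (2 : ℕ)) N).card : ℝ) ≤ (2 * R + 3) * 2 ^ r := by
    rw [Int.card_Icc, show N + 1 - (-N - ((2 : ℕ) : ℤ)) = 2 * N + 3 by push_cast; ring,
      ← Int.cast_natCast, Int.toNat_of_nonneg (by positivity)]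
    push_cast [N]
    nlinarith [one_le_pow₀ (M₀ := ℝ) (a := 2) (n := r) one_le_two]
  have hM0 : 0 ≤ M := (norm_nonneg _).trans (hM 0)
  calc ‖z⁻¹ - 1‖ ^ 2 * ‖psiInt φ p r t‖ = ‖∑' l, (Δ_[1])^[2] a l * z ^ l‖ := by
        rw [tsum_fwdDiff_iter_mul_zpow hfin (exp_ne_zero _), norm_mul, norm_pow, psiInt_eq_tsum]
    _ ≤ (Finset.Icc (-N - (2 : ℕ)) N).card * (M * h ^ 2) := norm_tsum_le_card_mul
        (fun l hl => by rw [fwdDiff_iter_eq_zero_of_notMem_Icc ha 2 hl, zero_mul]) hterm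
    _ ≤ (2 * R + 3) * 2 ^ r * (M * h ^ 2) := by gcongr
    _ = (2 * R + 3) * M / 2 ^ r := by simp only [h]; field_simp

theorem psi_decay_estimate_general (φ : ℝ → ℝ)
    (hφ_smooth : ContDiff ℝ (⊤ : ℕ∞) φ) (hφ_supp : HasCompactSupport φ) :
    ∃ C : ℝ, 0 < C ∧
      ∀ (p : ℕ) (r : ℕ), 2 ≤ p →
      ∀ t : ℤ, ¬ (p : ℤ) ∣ t →
        ‖psiInt φ p r t‖ ≤
          C * (2 : ℝ) ^ (-(r : ℤ)) * (p : ℝ) ^ 2 / ((distIntMod p t 0 : ℝ)) ^ 2 := by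
  have hφ : ContDiff ℝ 2 φ := hφ_smooth.of_le (by norm_cast)
  obtain ⟨R, hR⟩ := hφ_supp.exists_nat_abs_le
  obtain ⟨M, hM⟩ := (hφ.continuous_iteratedDeriv' 2).bounded_above_of_compact_support
    (by rw [iteratedDeriv_eq_iterate]; exact hφ_supp.deriv.deriv)
  refine ⟨(2 * R + 3) * max M 1 / 16, by positivity, fun p r hp t ht => ?_⟩
  have hpt : ¬(p : ℤ) ∣ -t := by rwa [Int.dvd_neg]
  have hlow := four_mul_distIntMod_div_le_norm_exp_sub_one (by omega) hpt
  rw [distIntMod_neg_left_zero, Int.cast_neg, mul_neg, neg_div, exp_neg] at hlow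
  have hupp := norm_exp_inv_sub_one_sq_mul_norm_psiInt_le hφ hR
    (fun x => (hM x).trans (le_max_left M 1)) p r t
  have hd : (0 : ℝ) < distIntMod p t 0 := by exact_mod_cast distIntMod_zero_pos (by omega) ht
  have hp : (0 : ℝ) < p := by positivity
  have hpsi : ‖psiInt φ p r t‖ * (4 * distIntMod p t 0 / p) ^ 2 ≤ (2 * R + 3) * max M 1 / 2 ^ r :=
    (mul_le_mul_of_nonneg_left (pow_le_pow_left₀ (by positivity) hlow 2) (norm_nonneg _)).trans
      (by rw [mul_comm]; exact hupp)
  calc ‖psiInt φ p r t‖ ≤ (2 * R + 3) * max M 1 / 2 ^ r / (4 * distIntMod p t 0 / p) ^ 2 :=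
        (le_div_iff₀ (by positivity)).2 hpsi
    _ = _ := by rw [zpow_neg, zpow_natCast]; field_simp; ring

/-- For a fixed smooth cutoff `φ` there is a constant `C`, depending only on `φ`, such
that for every integer `p ≥ 2`, every `r ≥ 0` and every integer `t` not divisible by `p`:
`|ψ_r(t)| ≤ C 2^{-r} p² / dist_p(t,0)²`. -/
theorem psi_decay_estimate (φ : ℝ → ℝ)
    (hφ_smooth : ContDiff ℝ (⊤ : ℕ∞) φ) (hφ_supp : HasCompactSupport φ)
    (hφ_nonneg : ∀ x, 0 ≤ φ x) (hφ_le_one : ∀ x, φ x ≤ 1)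
    (hφ_one : ∀ x ∈ Set.Icc (-2 : ℝ) 2, φ x = 1)
    (hφ_supp' : ∀ x, φ x ≠ 0 → x ∈ Set.Icc (-2 - 1/100 : ℝ) (2 + 1/100)) :
    ∃ C : ℝ, 0 < C ∧
      ∀ (p : ℕ) (r : ℕ), 2 ≤ p →
      ∀ t : ℤ, ¬ (p : ℤ) ∣ t →
        ‖psiInt φ p r t‖ ≤
          C * (2 : ℝ) ^ (-(r : ℤ)) * (p : ℝ) ^ 2 / ((distIntMod p t 0 : ℝ)) ^ 2 :=
  psi_decay_estimate_general φ hφ_smooth hφ_supp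
end
end
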